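/- Let g be a finite-dimensional complex simple Lie algebra and β₁, …, β_k mutually orthogonal long roots constructed as in the context, such that σ_i = β₁ + ⋯ + β_i is dominant for every i ≤ k. If l₁, …, l_k are nonnegative integers such that the graded component g_{l₁⋯l_k} contains a nonzero root space, then l₁ + ⋯ + l_k ≤ 2. -/

import Mathlib

/-!
Let `σ = β₁ + ⋯ + β_k` and let `α` be a root with `α(H_{β_i}) = l_i`. Pairing with the
coroots gives `∑ l_i (β_i, β_i) = 2 (σ, α)`. Since `σ` is dominant and `β₁` is the highest
root, `β₁ - α` is a nonnegative combination of simple roots, so `(σ, α) ≤ (σ, β₁) = (β₁, β₁)`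
by orthogonality; and `(β₁, β₁) ≤ (β_i, β_i)` because the `β_i` are long. Hence
`(∑ l_i) (β₁, β₁) ≤ 2 (β₁, β₁)`. The only analytic input is `(μ, μ) > 0` for roots `μ`: the
Killing form restricted to `H` is `∑_χ dim g_χ · χ ⊗ χ` over the weights, and the weights take
rational values on the vector dual to a root.
-/

open Finset
open scoped Classical

noncomputable section

namespace Stmt13

variable {L : Type*} [LieRing L] [LieAlgebra ℂ L] (H : LieSubalgebra ℂ L)

/-- The root space of a linear functional `α` on the Cartan subalgebra `H`: the
simultaneous eigenspace of the operators `ad h`, `h ∈ H`, with eigenvalues `α h`. -/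
def rootSpace' (α : Module.Dual ℂ H) : Submodule ℂ L where
  carrier := {x | ∀ h : H, ⁅(h : L), x⁆ = α h • x}
  add_mem' := fun {a b} ha hb => by
    intro h; rw [lie_add, ha h, hb h, smul_add]
  zero_mem' := by intro h; rw [lie_zero, smul_zero]
  smul_mem' := fun c x hx => by
    intro h; rw [lie_smul, hx h, smul_comm]

/-- `α` is a root of `L` with respect to the Cartan subalgebra `H`. -/
def IsRootOf (α : Module.Dual ℂ H) : Prop := α ≠ 0 ∧ rootSpace' H α ≠ ⊥

/-- `α` is a simple root: a positive root which is not the sum of two positive roots. -/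
def IsSimpleRootOf (Φpos : Finset (Module.Dual ℂ H)) (α : Module.Dual ℂ H) : Prop :=
  α ∈ Φpos ∧ ∀ β ∈ Φpos, ∀ γ ∈ Φpos, α ≠ β + γ

/-- Nonnegative integer combinations of the simple roots. -/
def posCone (Φpos : Finset (Module.Dual ℂ H)) : AddSubmonoid (Module.Dual ℂ H) :=
  AddSubmonoid.closure {μ | IsSimpleRootOf H Φpos μ}

/-- `α₀` is the highest root: it is a root and `α₀ - γ` is a nonnegative integer
combination of simple roots, for every root `γ`. -/
def IsHighestRootOf (Φ Φpos : Finset (Module.Dual ℂ H)) (α₀ : Module.Dual ℂ H) : Prop :=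
  α₀ ∈ Φ ∧ ∀ γ ∈ Φ, α₀ - γ ∈ posCone H Φpos

/-- `γ` is a long root: its squared length, with respect to the invariant form `B`,
is maximal among all roots. -/
def IsLongRootOf (Φ : Finset (Module.Dual ℂ H))
    (B : Module.Dual ℂ H → Module.Dual ℂ H → ℚ) (γ : Module.Dual ℂ H) : Prop :=
  γ ∈ Φ ∧ ∀ δ ∈ Φ, B δ δ ≤ B γ γ

/-- `τ` is a highest long root orthogonal to all the elements of `S`:  it is a long root
orthogonal to `S` dominating every long root orthogonal to `S`. -/
def IsHighestLongRootOrtho (Φ Φpos : Finset (Module.Dual ℂ H))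
    (B : Module.Dual ℂ H → Module.Dual ℂ H → ℚ) (S : Set (Module.Dual ℂ H))
    (τ : Module.Dual ℂ H) : Prop :=
  IsLongRootOf H Φ B τ ∧ (∀ s ∈ S, B τ s = 0) ∧
    ∀ γ, IsLongRootOf H Φ B γ → (∀ s ∈ S, B γ s = 0) → τ - γ ∈ posCone H Φpos

/-- The sequence `r 1, …, r k` of mutually orthogonal long roots of the paper:
`r 1 = α₀` is the highest root, and inductively `r i` is a highest long root
orthogonal to `r 1, …, r (i-1)`. -/
def IsOrthogonalRootSeq (Φ Φpos : Finset (Module.Dual ℂ H))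
    (B : Module.Dual ℂ H → Module.Dual ℂ H → ℚ)
    (r : ℕ → Module.Dual ℂ H) (k : ℕ) : Prop :=
  IsHighestRootOf H Φ Φpos (r 1) ∧
    ∀ i, 2 ≤ i → i ≤ k →
      IsHighestLongRootOrtho H Φ Φpos B {s | ∃ j, 1 ≤ j ∧ j < i ∧ s = r j} (r i)

/-- `σ` is a dominant (integral) weight: it pairs with the coroot of every positive
root in a nonnegative integer. -/
def IsDominantOf (Φpos : Finset (Module.Dual ℂ H))
    (B : Module.Dual ℂ H → Module.Dual ℂ H → ℚ) (σ : Module.Dual ℂ H) : Prop :=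
  ∀ μ ∈ Φpos, ∃ n : ℕ, 2 * B σ μ = n * B μ μ

section BiadditiveForm

variable {V : Type*} [AddCommGroup V] {B : V → V → ℚ}

lemma add_right_of_symm (hBsymm : ∀ x y, B x y = B y x)
    (hBadd : ∀ x y z, B (x + y) z = B x z + B y z) (x y z : V) :
    B x (y + z) = B x y + B x z := by
  rw [hBsymm, hBadd, hBsymm y, hBsymm z]

lemma sub_right_of_symm (hBsymm : ∀ x y, B x y = B y x)
    (hBadd : ∀ x y z, B (x + y) z = B x z + B y z) (x y z : V) :
    B x (y - z) = B x y - B x z :=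
  map_sub (AddMonoidHom.mk' (B x) (add_right_of_symm hBsymm hBadd x)) y z

lemma sum_right_of_symm (hBsymm : ∀ x y, B x y = B y x)
    (hBadd : ∀ x y z, B (x + y) z = B x z + B y z) (x : V) {ι : Type*} (s : Finset ι) (f : ι → V) :
    B x (∑ i ∈ s, f i) = ∑ i ∈ s, B x (f i) :=
  map_sum (AddMonoidHom.mk' (B x) (add_right_of_symm hBsymm hBadd x)) f s

end BiadditiveForm

section Killing

open LieModule Module

variable {H} [FiniteDimensional ℂ L] [H.IsCartanSubalgebra]

lemma killingForm_eq_sum_weight (t h : H) :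
    killingForm ℂ L t h = ∑ χ : Weight ℂ H L, finrank ℂ (genWeightSpace L χ) • (χ t * χ h) :=
  traceForm_eq_sum_finrank_nsmul_mul ℂ H L t h

lemma killingForm_eq_zero_of_forall_weight_eq_zero {t : H}
    (ht : ∀ χ : Weight ℂ H L, χ t = 0) (h : H) : killingForm ℂ L t h = 0 := by
  simp [killingForm_eq_sum_weight, ht]

lemma exists_pos_rat_killingForm_self {t : H} (hrat : ∀ χ : Weight ℂ H L, ∃ q : ℚ, χ t = q)
    (hne : ∃ χ : Weight ℂ H L, χ t ≠ 0) : ∃ p : ℚ, 0 < p ∧ killingForm ℂ L t t = p := by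
  choose q hq using hrat
  refine ⟨∑ χ : Weight ℂ H L, finrank ℂ (genWeightSpace L χ) * q χ ^ 2, ?_, ?_⟩
  · obtain ⟨χ, hχ⟩ := hne
    refine Finset.sum_pos' (fun χ _ => by positivity) ⟨χ, mem_univ χ, mul_pos ?_ ?_⟩
    · exact_mod_cast zero_lt_finrank_genWeightSpace χ.genWeightSpace_ne_bot
    · have : q χ ≠ 0 := by rintro h0; exact hχ (by rw [hq, h0, Rat.cast_zero])
      positivity
  · simp only [killingForm_eq_sum_weight, hq, nsmul_eq_mul]
    push_cast
    ring_nf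

lemma isRootOf_toLinear {χ : Weight ℂ H L} (hχ : χ.IsNonZero) :
    IsRootOf H (Weight.toLinear ℂ H L χ) := by
  refine ⟨fun h => hχ ?_, ?_⟩
  · ext x; exact LinearMap.congr_fun h x
  · obtain ⟨m, hm0, hm⟩ := exists_forall_lie_eq_smul ℂ H L χ
    exact (Submodule.ne_bot_iff _).2 ⟨m, hm, hm0⟩

lemma pos_self_of_mem {Φ : Finset (Module.Dual ℂ H)} (hΦ : ∀ a, a ∈ Φ ↔ IsRootOf H a)
    {B : Module.Dual ℂ H → Module.Dual ℂ H → ℚ} {tcov : Module.Dual ℂ H → H}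
    (htcov : ∀ (a : Module.Dual ℂ H) (h : H), killingForm ℂ L (tcov a : L) (h : L) = a h)
    {c : ℚ} (hcpos : 0 < c) (hBkill : ∀ a ∈ Φ, ∀ b ∈ Φ, (B a b : ℂ) = (c : ℂ) * a (tcov b))
    {μ : Module.Dual ℂ H} (hμ : μ ∈ Φ) : 0 < B μ μ := by
  have hrat (χ : Weight ℂ H L) : ∃ q : ℚ, χ (tcov μ) = q := by
    by_cases hχ : χ.IsZero
    · exact ⟨0, by simp [hχ.eq]⟩
    · refine ⟨B (Weight.toLinear ℂ H L χ) μ / c, ?_⟩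
      rw [Rat.cast_div, hBkill _ ((hΦ _).2 (isRootOf_toLinear hχ)) μ hμ,
        mul_div_cancel_left₀ _ (by exact_mod_cast hcpos.ne')]
      rfl
  have hne : ∃ χ : Weight ℂ H L, χ (tcov μ) ≠ 0 := by
    by_contra! h0
    refine ((hΦ μ).1 hμ).1 (LinearMap.ext fun h => ?_)
    rw [← htcov, killingForm_eq_zero_of_forall_weight_eq_zero h0, LinearMap.zero_apply]
  obtain ⟨p, hp, hKp⟩ := exists_pos_rat_killingForm_self hrat hne
  have : (B μ μ : ℂ) = (c * p : ℚ) := by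
    rw [hBkill μ hμ μ hμ, ← htcov, hKp, Rat.cast_mul]
  rw [Rat.cast_injective this]
  positivity

end Killing

section Roots

variable {H} {Φ Φpos : Finset (Module.Dual ℂ H)} {B : Module.Dual ℂ H → Module.Dual ℂ H → ℚ}

lemma IsDominantOf.nonneg {σ : Module.Dual ℂ H} (hσ : IsDominantOf H Φpos B σ)
    {μ : Module.Dual ℂ H} (hμ : μ ∈ Φpos) (hμμ : 0 < B μ μ) : 0 ≤ B σ μ := by
  obtain ⟨n, hn⟩ := hσ μ hμ
  nlinarith [n.cast_nonneg (α := ℚ)]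

lemma IsDominantOf.nonneg_of_mem_posCone (hBsymm : ∀ x y, B x y = B y x)
    (hBadd : ∀ x y z, B (x + y) z = B x z + B y z) (hpos : ∀ μ ∈ Φpos, 0 < B μ μ)
    {σ : Module.Dual ℂ H} (hσ : IsDominantOf H Φpos B σ) {x : Module.Dual ℂ H}
    (hx : x ∈ posCone H Φpos) : 0 ≤ B σ x := by
  induction hx using AddSubmonoid.closure_induction with
  | mem μ hμ => exact hσ.nonneg hμ.1 (hpos μ hμ.1)
  | zero => exact (map_zero (AddMonoidHom.mk' (B σ) (add_right_of_symm hBsymm hBadd σ))).ge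
  | add x y _ _ hx hy => rw [add_right_of_symm hBsymm hBadd]; exact add_nonneg hx hy

lemma IsDominantOf.le_of_isHighestRootOf (hBsymm : ∀ x y, B x y = B y x)
    (hBadd : ∀ x y z, B (x + y) z = B x z + B y z) (hpos : ∀ μ ∈ Φpos, 0 < B μ μ)
    {σ : Module.Dual ℂ H} (hσ : IsDominantOf H Φpos B σ) {α₀ : Module.Dual ℂ H}
    (hα₀ : IsHighestRootOf H Φ Φpos α₀) {γ : Module.Dual ℂ H} (hγ : γ ∈ Φ) :
    B σ γ ≤ B σ α₀ := by
  have := hσ.nonneg_of_mem_posCone hBsymm hBadd hpos (hα₀.2 γ hγ)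
  rw [sub_right_of_symm hBsymm hBadd] at this
  linarith

namespace IsOrthogonalRootSeq

variable {r : ℕ → Module.Dual ℂ H} {k : ℕ}

lemma mem (hseq : IsOrthogonalRootSeq H Φ Φpos B r k) {i : ℕ} (h1 : 1 ≤ i) (hk : i ≤ k) :
    r i ∈ Φ := by
  obtain rfl | h2 := h1.eq_or_lt
  · exact hseq.1.1
  · exact (hseq.2 i h2 hk).1.1

lemma apply_eq_zero (hseq : IsOrthogonalRootSeq H Φ Φpos B r k) {i j : ℕ} (hj : 1 ≤ j)
    (hji : j < i) (hik : i ≤ k) : B (r i) (r j) = 0 :=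
  (hseq.2 i (by omega) hik).2.1 (r j) ⟨j, hj, hji, rfl⟩

lemma self_le (hseq : IsOrthogonalRootSeq H Φ Φpos B r k) {i : ℕ} (h1 : 1 ≤ i) (hk : i ≤ k) :
    B (r 1) (r 1) ≤ B (r i) (r i) := by
  obtain rfl | h2 := h1.eq_or_lt
  · exact le_rfl
  · exact (hseq.2 i h2 hk).1.2 (r 1) hseq.1.1

lemma apply_sum_eq (hseq : IsOrthogonalRootSeq H Φ Φpos B r k) (hBsymm : ∀ x y, B x y = B y x)
    (hBadd : ∀ x y z, B (x + y) z = B x z + B y z) (hk : 1 ≤ k) :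
    B (r 1) (∑ j ∈ Icc 1 k, r j) = B (r 1) (r 1) := by
  rw [sum_right_of_symm hBsymm hBadd, sum_eq_single_of_mem 1 (mem_Icc.2 ⟨le_rfl, hk⟩)]
  intro j hj hj_ne
  obtain ⟨hj_pos, hjk⟩ := mem_Icc.1 hj
  rw [hBsymm, hseq.apply_eq_zero le_rfl (by omega) hjk]

end IsOrthogonalRootSeq

lemma sum_degree_mul_self_eq (hBsymm : ∀ x y, B x y = B y x)
    (hBadd : ∀ x y z, B (x + y) z = B x z + B y z) {r : ℕ → Module.Dual ℂ H} {k : ℕ}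
    {Hc : ℕ → H} (hHc : ∀ i, 1 ≤ i → i ≤ k → ∀ μ ∈ Φ,
      (B (r i) (r i) : ℂ) * μ (Hc i) = 2 * (B μ (r i) : ℂ))
    {l : ℕ → ℕ} {α : Module.Dual ℂ H} (hα : α ∈ Φ)
    (hαl : ∀ i, 1 ≤ i → i ≤ k → α (Hc i) = (l i : ℂ)) :
    ∑ i ∈ Icc 1 k, (l i : ℚ) * B (r i) (r i) = 2 * B α (∑ i ∈ Icc 1 k, r i) := by
  rw [sum_right_of_symm hBsymm hBadd, mul_sum]
  refine sum_congr rfl fun i hi => ?_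
  obtain ⟨h1, hk⟩ := mem_Icc.1 hi
  have := hHc i h1 hk α hα
  rw [hαl i h1 hk] at this
  exact_mod_cast (mul_comm _ _).trans this

end Roots

theorem sum_of_nonnegative_degrees_le_two_general
    {L : Type*} [LieRing L] [LieAlgebra ℂ L] [FiniteDimensional ℂ L]
    (H : LieSubalgebra ℂ L) [H.IsCartanSubalgebra]
    (Φ Φpos : Finset (Module.Dual ℂ H))
    (hΦ : ∀ a, a ∈ Φ ↔ IsRootOf H a)
    (hpos_sub : Φpos ⊆ Φ)
    -- `B` is an invariant scalar product on weights: it is symmetric, biadditive,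
    -- ℚ-homogeneous, and on roots it is a positive multiple `c` of the scalar product
    -- induced by the Killing form (via the covector map `tcov`).
    (B : Module.Dual ℂ H → Module.Dual ℂ H → ℚ)
    (hBsymm : ∀ x y, B x y = B y x)
    (hBadd : ∀ x y z, B (x + y) z = B x z + B y z)
    (tcov : Module.Dual ℂ H → H)
    (htcov : ∀ (a : Module.Dual ℂ H) (h : H), killingForm ℂ L (tcov a : L) (h : L) = a h)
    (c : ℚ) (hcpos : 0 < c)
    (hBkill : ∀ a ∈ Φ, ∀ b ∈ Φ, (B a b : ℂ) = (c : ℂ) * a (tcov b))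
    (k : ℕ) (r : ℕ → Module.Dual ℂ H)
    (hseq : IsOrthogonalRootSeq H Φ Φpos B r k)
    (hdom : ∀ i, 1 ≤ i → i ≤ k → IsDominantOf H Φpos B (∑ j ∈ Finset.Icc 1 i, r j))
    -- the coroots of the `r i`
    (Hc : ℕ → H)
    (hHc : ∀ i, 1 ≤ i → i ≤ k → ∀ μ ∈ Φ,
      (B (r i) (r i) : ℂ) * μ (Hc i) = 2 * (B μ (r i) : ℂ))
    (l : ℕ → ℕ)
    (hl : ∃ α ∈ Φ, ∀ i, 1 ≤ i → i ≤ k → α (Hc i) = (l i : ℂ)) :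
    ∑ i ∈ Finset.Icc 1 k, l i ≤ 2 := by
  obtain ⟨α, hα, hαl⟩ := hl
  rcases Nat.eq_zero_or_pos k with rfl | hk
  · simp
  have hpos (μ : Module.Dual ℂ H) (hμ : μ ∈ Φ) : 0 < B μ μ :=
    pos_self_of_mem hΦ htcov hcpos hBkill hμ
  set σ := ∑ j ∈ Icc 1 k, r j
  have hσα : B σ α ≤ B (r 1) (r 1) :=
    calc B σ α ≤ B σ (r 1) := (hdom k hk le_rfl).le_of_isHighestRootOf hBsymm hBadd
          (fun μ hμ => hpos μ (hpos_sub hμ)) hseq.1 hα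
      _ = B (r 1) (r 1) := by rw [hBsymm, hseq.apply_sum_eq hBsymm hBadd hk]
  have hsum : (∑ i ∈ Icc 1 k, (l i : ℚ)) * B (r 1) (r 1) ≤ 2 * B (r 1) (r 1) :=
    calc (∑ i ∈ Icc 1 k, (l i : ℚ)) * B (r 1) (r 1)
        ≤ ∑ i ∈ Icc 1 k, (l i : ℚ) * B (r i) (r i) := by
          rw [sum_mul]
          exact sum_le_sum fun i hi => mul_le_mul_of_nonneg_left
            (hseq.self_le (mem_Icc.1 hi).1 (mem_Icc.1 hi).2) (Nat.cast_nonneg _)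
      _ = 2 * B σ α := by rw [sum_degree_mul_self_eq hBsymm hBadd hHc hα hαl, hBsymm]
      _ ≤ 2 * B (r 1) (r 1) := by linarith
  exact_mod_cast le_of_mul_le_mul_right hsum (hpos _ (hseq.mem le_rfl hk))

/-- `r 1, …, r k` are the mutually orthogonal long roots of the
paper with all partial sums `σ_i = r 1 + ⋯ + r i` dominant, and `Hc i` is the coroot
of `r i`.  If there is a root `α` with `α (Hc i) = l i` for all `i = 1, …, k`, where
the `l i` are nonnegative integers, then `l 1 + ⋯ + l k ≤ 2`. -/
theorem sum_of_nonnegative_degrees_le_two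
    {L : Type*} [LieRing L] [LieAlgebra ℂ L] [FiniteDimensional ℂ L]
    [LieAlgebra.IsSimple ℂ L]
    (H : LieSubalgebra ℂ L) [H.IsCartanSubalgebra]
    (Φ Φpos : Finset (Module.Dual ℂ H))
    (hΦ : ∀ a, a ∈ Φ ↔ IsRootOf H a)
    (hpos_sub : Φpos ⊆ Φ)
    (hpos_mem : ∀ a ∈ Φ, (a ∈ Φpos ↔ -a ∉ Φpos))
    (hpos_add : ∀ a ∈ Φpos, ∀ b ∈ Φpos, a + b ∈ Φ → a + b ∈ Φpos)
    -- `B` is an invariant scalar product on weights: it is symmetric, biadditive,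
    -- ℚ-homogeneous, and on roots it is a positive multiple `c` of the scalar product
    -- induced by the Killing form (via the covector map `tcov`).
    (B : Module.Dual ℂ H → Module.Dual ℂ H → ℚ)
    (hBsymm : ∀ x y, B x y = B y x)
    (hBadd : ∀ x y z, B (x + y) z = B x z + B y z)
    (hBsmul : ∀ (q : ℚ) (x y), B ((q : ℂ) • x) y = q * B x y)
    (tcov : Module.Dual ℂ H → H)
    (htcov : ∀ (a : Module.Dual ℂ H) (h : H), killingForm ℂ L (tcov a : L) (h : L) = a h)
    (c : ℚ) (hcpos : 0 < c)
    (hBkill : ∀ a ∈ Φ, ∀ b ∈ Φ, (B a b : ℂ) = (c : ℂ) * a (tcov b))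
    (k : ℕ) (r : ℕ → Module.Dual ℂ H)
    (hseq : IsOrthogonalRootSeq H Φ Φpos B r k)
    (hdom : ∀ i, 1 ≤ i → i ≤ k → IsDominantOf H Φpos B (∑ j ∈ Finset.Icc 1 i, r j))
    -- the coroots of the `r i`
    (Hc : ℕ → H)
    (hHc : ∀ i, 1 ≤ i → i ≤ k → ∀ μ ∈ Φ,
      (B (r i) (r i) : ℂ) * μ (Hc i) = 2 * (B μ (r i) : ℂ))
    (l : ℕ → ℕ)
    (hl : ∃ α ∈ Φ, ∀ i, 1 ≤ i → i ≤ k → α (Hc i) = (l i : ℂ)) :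
    ∑ i ∈ Finset.Icc 1 k, l i ≤ 2 :=
  sum_of_nonnegative_degrees_le_two_general H Φ Φpos hΦ hpos_sub B hBsymm hBadd tcov htcov c hcpos
    hBkill k r hseq hdom Hc hHc l hl

end Stmt13
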